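/- arXiv:2012.04711 — 2 statements merged into one kernel-verified Lean document; each statement's English description precedes it below -/
import Mathlib

section
/- For 2 ≤ m ≤ n and 0 ≤ ℓ ≤ n−m, the weighted Lah number W(0, n−1−ℓ, m−1) equals the unsigned Stirling number of the first kind with parameters n−1−ℓ and m−1, and in particular is positive. -/
noncomputable section

open Finset

/-- The weight of a linearly ordered block (given as a list): the number of its
elements smaller than its first element. -/
def blockWeight (b : List ℕ) : ℕ := (b.filter (fun x => x < b.headI)).length

/-- `P` is a partition of `{1,…,n}` into linearly ordered blocks (nonempty lists
of distinct elements, pairwise disjoint, whose union is `{1,…,n}`). -/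
def IsOrderedPartition (n : ℕ) (P : Finset (List ℕ)) : Prop :=
  (∀ b ∈ P, b ≠ [] ∧ b.Nodup) ∧
  (∀ b₁ ∈ P, ∀ b₂ ∈ P, b₁ ≠ b₂ → ∀ x, x ∈ b₁ → x ∉ b₂) ∧
  (∀ x : ℕ, (∃ b ∈ P, x ∈ b) ↔ x ∈ Finset.Icc 1 n)

/-- The weight of an ordered partition: the sum of the weights of its blocks. -/
def partitionWeight (P : Finset (List ℕ)) : ℕ := ∑ b ∈ P, blockWeight b

/-- The weighted Lah number `W(ℓ,n,m)`: the number of partitions of `{1,…,n}`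
into exactly `m` linearly ordered blocks with total weight `ℓ`.
(It vanishes for `ℓ < 0`.) -/
def weightedLah (ℓ : ℤ) (n m : ℕ) : ℕ :=
  Set.ncard {P : Finset (List ℕ) |
    IsOrderedPartition n P ∧ P.card = m ∧ (partitionWeight P : ℤ) = ℓ}

/-- The number of cycles of a permutation of `Fin n` (fixed points count as cycles). -/
def numCycles {n : ℕ} (σ : Equiv.Perm (Fin n)) : ℕ :=
  Multiset.card σ.cycleType + (n - σ.cycleType.sum)

/-- The unsigned Stirling number of the first kind: the number of permutations of
`n` elements with exactly `m` cycles. -/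
def stirlingFirst (n m : ℕ) : ℕ :=
  Nat.card {σ : Equiv.Perm (Fin n) // numCycles σ = m}

/-- The number of descents of a permutation of `Fin m`. -/
def descentCount (m : ℕ) (σ : Equiv.Perm (Fin m)) : ℕ :=
  ((Finset.range (m - 1)).filter (fun i =>
    ((List.ofFn (fun j => (σ j : ℕ))).getD (i + 1) 0) <
      ((List.ofFn (fun j => (σ j : ℕ))).getD i 0))).card

/-- The Eulerian number `A(m,j)`: permutations of `{1,…,m}` with exactly `j` descents. -/
def eulerian (m j : ℕ) : ℕ :=
  Nat.card {σ : Equiv.Perm (Fin m) // descentCount m σ = j}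

/-- The coefficient `e_{k,n,m}` of the Ehrhart polynomial of the hypersimplex. -/
def eCoef (k n m : ℕ) : ℚ :=
  (1 / (n - 1).factorial : ℚ) *
    ∑ ℓ ∈ Finset.range k, (weightedLah ℓ n (m + 1) : ℚ) * (eulerian m (k - ℓ - 1) : ℚ)

/-- Number of lattice points of the `t`-th dilate of the hypersimplex `Δ_{k,n}`,
i.e. points of `{0,…,t}^n` with coordinate sum `k·t`. -/
def hyperCount (k n t : ℕ) : ℕ :=
  Nat.card {x : Fin n → ℤ // (∀ i, 0 ≤ x i ∧ x i ≤ (t : ℤ)) ∧ ∑ i, x i = (k : ℤ) * t}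

/-- Number of lattice points of the `t`-th dilate of the half-open hypersimplex
`Δ'_{k,n} ⊆ ℝ^{n-1}` (for `k > 1`). -/
def halfOpenCount (k n t : ℕ) : ℕ :=
  Nat.card {x : Fin (n - 1) → ℤ // (∀ i, 0 ≤ x i ∧ x i ≤ (t : ℤ)) ∧
    ((k : ℤ) - 1) * t < ∑ i, x i ∧ ∑ i, x i ≤ (k : ℤ) * t}

/-- Number of lattice points of the `t`-th dilate of the independence polytope of
`U_{k,n}`, i.e. points of `{0,…,t}^n` with coordinate sum at most `k·t`. -/
def indepCount (k n t : ℕ) : ℕ :=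
  Nat.card {x : Fin n → ℤ // (∀ i, 0 ≤ x i ∧ x i ≤ (t : ℤ)) ∧ ∑ i, x i ≤ (k : ℤ) * t}

/-- Number of lattice points of a region `S ⊆ ℝ^d`. -/
def latticeCount {d : ℕ} (S : Set (Fin d → ℝ)) : ℕ :=
  Nat.card {x : Fin d → ℤ // (fun i => (x i : ℝ)) ∈ S}

/-!
A block of weight zero is a list whose first element is its least one, so it can be read as
a cycle written from its least element; singleton blocks are fixed points. Conversely, every
cycle of a permutation has exactly one such reading. This gives a bijection between
zero-weight partitions of `{1,…,N}` into `M` ordered blocks and permutations of `Fin N` with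
`M` cycles. Positivity: one `(N - M + 1)`-cycle together with `M - 1` fixed points.
-/

theorem Equiv.Perm.exists_cycleFactorsFinset_eq {α : Type*} [Fintype α] [DecidableEq α]
    {s : Finset (Equiv.Perm α)} (hc : ∀ f ∈ s, f.IsCycle)
    (hd : (s : Set (Equiv.Perm α)).Pairwise Equiv.Perm.Disjoint) :
    ∃ σ : Equiv.Perm α, σ.cycleFactorsFinset = s :=
  ⟨s.noncommProd id (hd.mono' fun _ _ => Equiv.Perm.Disjoint.commute),
    Equiv.Perm.cycleFactorsFinset_eq_finset.mpr ⟨hc, hd, rfl⟩⟩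

lemma blockWeight_cons_eq_zero_iff {a : ℕ} {l : List ℕ} :
    blockWeight (a :: l) = 0 ↔ ∀ y ∈ l, a ≤ y := by
  simp only [blockWeight, List.length_eq_zero_iff, List.filter_eq_nil_iff, List.forall_mem_cons]
  refine (and_iff_right (by simp)).trans (forall₂_congr fun y _ => ?_)
  rw [decide_eq_true_iff, not_lt, List.headI_cons]

theorem stirlingFirst_pos {N M : ℕ} (hM : 1 ≤ M) (hMN : M ≤ N) : 0 < stirlingFirst N M := by
  have : Nonempty {σ : Equiv.Perm (Fin N) // numCycles σ = M} := by
    obtain rfl | hlt := hMN.eq_or_lt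
    · exact ⟨⟨1, by simp [numCycles]⟩⟩
    · obtain ⟨σ, hσ⟩ : ∃ σ : Equiv.Perm (Fin N), σ.cycleType = {N - M + 1} :=
        (Equiv.Perm.exists_with_cycleType_iff (Fin N)).mpr ⟨by simp; omega, by simp; omega⟩
      exact ⟨⟨σ, by simp [numCycles, hσ]; omega⟩⟩
  exact Nat.card_pos

namespace IsOrderedPartition

variable {N : ℕ} {P : Finset (List ℕ)} (hP : IsOrderedPartition N P) {b b₁ b₂ : List ℕ}
include hP

lemma nodup (hb : b ∈ P) : b.Nodup := (hP.1 b hb).2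

lemma mem_Icc (hb : b ∈ P) {y : ℕ} (hy : y ∈ b) : y ∈ Icc 1 N := (hP.2.2 y).mp ⟨b, hb, hy⟩

lemma eq_of_mem_of_mem (hb₁ : b₁ ∈ P) (hb₂ : b₂ ∈ P) {y : ℕ} (hy₁ : y ∈ b₁) (hy₂ : y ∈ b₂) :
    b₁ = b₂ :=
  by_contra fun hne => hP.2.1 b₁ hb₁ b₂ hb₂ hne y hy₁ hy₂

lemma exists_eq_singleton_of_not_two_le (hb : b ∈ P) (h2 : ¬2 ≤ b.length) : ∃ y, b = [y] :=
  List.length_eq_one_iff.mp (by have := List.length_pos_iff.mpr (hP.1 b hb).1; omega)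

end IsOrderedPartition

namespace WeightedLah

open Equiv Equiv.Perm

variable {N : ℕ}

/-- `Fin N` stands for `{1,…,N}`, shifted by one. -/
def label (x : Fin N) : ℕ := x + 1

lemma label_injective : Function.Injective (label (N := N)) :=
  fun _ _ h => Fin.ext (Nat.add_right_cancel h)

lemma label_le_label {x y : Fin N} : label x ≤ label y ↔ x ≤ y := by
  simp only [label, Fin.le_def, Nat.add_le_add_iff_right]

lemma label_mem_Icc (x : Fin N) : label x ∈ Icc 1 N := by
  simp only [label, mem_Icc]
  omega

lemma exists_label_eq {y : ℕ} (hy : y ∈ Icc 1 N) : ∃ x : Fin N, label x = y := by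
  rw [mem_Icc] at hy
  exact ⟨⟨y - 1, by omega⟩, by simp only [label]; omega⟩

lemma exists_map_label_eq {b : List ℕ} (hb : ∀ y ∈ b, y ∈ Icc 1 N) :
    ∃ l : List (Fin N), l.map label = b := by
  induction b with
  | nil => exact ⟨[], rfl⟩
  | cons y b ih =>
    obtain ⟨x, rfl⟩ := exists_label_eq (hb y List.mem_cons_self)
    obtain ⟨l, rfl⟩ := ih fun z hz => hb z (List.mem_cons_of_mem _ hz)
    exact ⟨x :: l, rfl⟩

def unlabel (y : ℕ) : Option (Fin N) := if h : y - 1 < N then some ⟨y - 1, h⟩ else none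

lemma unlabel_label (x : Fin N) : unlabel (label x) = some x := by
  simp [unlabel, label]

def blockPerm (b : List ℕ) : Perm (Fin N) := (b.filterMap unlabel).formPerm

lemma blockPerm_map_label (l : List (Fin N)) : blockPerm (l.map label) = l.formPerm := by
  simp [blockPerm, List.filterMap_map, unlabel_label]

def cycleBlock (c : Perm (Fin N)) : List ℕ :=
  if h : c.support.Nonempty then (c.toList (c.support.min' h)).map label else []

lemma nodup_cycleBlock (c : Perm (Fin N)) : (cycleBlock c).Nodup := by
  unfold cycleBlock
  split
  · exact (nodup_toList _ _).map label_injective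
  · exact List.nodup_nil

lemma mem_Icc_of_mem_cycleBlock {c : Perm (Fin N)} {y : ℕ} (hy : y ∈ cycleBlock c) :
    y ∈ Icc 1 N := by
  unfold cycleBlock at hy
  split at hy
  · obtain ⟨x, -, rfl⟩ := List.mem_map.mp hy
    exact label_mem_Icc x
  · simp at hy

section Cycle

variable {c : Perm (Fin N)} (hc : c.IsCycle)
include hc

lemma cycleBlock_eq :
    cycleBlock c = (c.toList (c.support.min' hc.nonempty_support)).map label :=
  dif_pos hc.nonempty_support

lemma label_mem_cycleBlock {x : Fin N} : label x ∈ cycleBlock c ↔ x ∈ c.support := by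
  have hm := c.support.min'_mem hc.nonempty_support
  rw [cycleBlock_eq hc, List.mem_map_of_injective label_injective, mem_toList_iff,
    and_iff_left hm]
  exact ⟨fun h => h.mem_support_iff.mp hm, hc.sameCycle (mem_support.mp hm) ∘ mem_support.mp⟩

lemma length_cycleBlock : (cycleBlock c).length = #c.support := by
  rw [cycleBlock_eq hc, List.length_map, Perm.length_toList,
    hc.cycleOf_eq (mem_support.mp (c.support.min'_mem _))]

lemma blockWeight_cycleBlock : blockWeight (cycleBlock c) = 0 := by
  set m := c.support.min' hc.nonempty_support
  have hm : m ∈ c.support := c.support.min'_mem _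
  obtain ⟨a, t, ht⟩ := List.exists_cons_of_length_pos (length_toList_pos_of_mem_support c m hm)
  obtain rfl : a = m := by simpa [ht] using toList_getElem_zero c m hm
  rw [cycleBlock_eq hc, ht, List.map_cons, blockWeight_cons_eq_zero_iff]
  intro y hy
  obtain ⟨x, hx, rfl⟩ := List.mem_map.mp hy
  have hxc : x ∈ c.toList m := ht ▸ List.mem_cons_of_mem _ hx
  exact label_le_label.mpr (c.support.min'_le x ((mem_toList_iff.mp hxc).1.mem_support_iff.mp hm))

lemma blockPerm_cycleBlock : blockPerm (cycleBlock c) = c := by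
  rw [cycleBlock_eq hc, blockPerm_map_label, formPerm_toList,
    hc.cycleOf_eq (mem_support.mp (c.support.min'_mem _))]

end Cycle

lemma cycleBlock_formPerm {l : List (Fin N)} (hl : l.Nodup) (h2 : 2 ≤ l.length)
    (hw : blockWeight (l.map label) = 0) : cycleBlock l.formPerm = l.map label := by
  obtain _ | ⟨a, t⟩ := l
  · simp at h2
  have hsupp : (List.formPerm (a :: t)).support = (a :: t).toFinset :=
    List.support_formPerm_of_nodup _ hl fun x h => by simp [h] at h2
  have hmin : (List.formPerm (a :: t)).support.min' (List.isCycle_formPerm hl h2).nonempty_support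
      = a := by
    refine le_antisymm (min'_le _ _ (by simp [hsupp])) (le_min' _ _ _ fun x hx => ?_)
    rw [hsupp, List.mem_toFinset, List.mem_cons] at hx
    rcases hx with rfl | hx
    · exact le_rfl
    · exact label_le_label.mp ((blockWeight_cons_eq_zero_iff.mp hw) _ (List.mem_map_of_mem hx))
  rw [cycleBlock_eq (List.isCycle_formPerm hl h2), hmin]
  simpa using congrArg (List.map label) (toList_formPerm_nontrivial (a :: t) h2 hl)

section BlockPerm

variable {b : List ℕ} (hb : b.Nodup) (hbN : ∀ y ∈ b, y ∈ Icc 1 N) (h2 : 2 ≤ b.length)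
include hb hbN h2

lemma isCycle_blockPerm : (blockPerm b : Perm (Fin N)).IsCycle := by
  obtain ⟨l, rfl⟩ := exists_map_label_eq hbN
  rw [blockPerm_map_label]
  exact List.isCycle_formPerm (hb.of_map label) (by simpa using h2)

lemma mem_support_blockPerm {x : Fin N} : x ∈ (blockPerm b).support ↔ label x ∈ b := by
  obtain ⟨l, rfl⟩ := exists_map_label_eq hbN
  rw [blockPerm_map_label, List.support_formPerm_of_nodup _ (hb.of_map label)
    fun y h => by simp [h] at h2, List.mem_toFinset, List.mem_map_of_injective label_injective]

lemma cycleBlock_blockPerm (hw : blockWeight b = 0) :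
    cycleBlock (blockPerm b : Perm (Fin N)) = b := by
  obtain ⟨l, rfl⟩ := exists_map_label_eq hbN
  rw [blockPerm_map_label]
  exact cycleBlock_formPerm (hb.of_map label) (by simpa using h2) hw

end BlockPerm

def blocks (σ : Perm (Fin N)) : Finset (List ℕ) :=
  σ.cycleFactorsFinset.image cycleBlock ∪ σ.supportᶜ.image fun x => [label x]

section Blocks

variable (σ : Perm (Fin N))

lemma leftInvOn_blockPerm_cycleBlock :
    Set.LeftInvOn blockPerm cycleBlock (σ.cycleFactorsFinset : Set (Perm (Fin N))) :=
  fun _ hc => blockPerm_cycleBlock (mem_cycleFactorsFinset_iff.mp hc).1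

lemma filter_blocks :
    (blocks σ).filter (fun b => 2 ≤ b.length) = σ.cycleFactorsFinset.image cycleBlock := by
  rw [blocks, filter_union, filter_true_of_mem, filter_false_of_mem, union_empty]
  · simp
  · simp only [mem_image]
    rintro _ ⟨c, hc, rfl⟩
    rw [length_cycleBlock (mem_cycleFactorsFinset_iff.mp hc).1]
    exact (mem_cycleFactorsFinset_iff.mp hc).1.two_le_card_support

lemma card_blocks : #(blocks σ) = numCycles σ := by
  have hdisj : Disjoint (σ.cycleFactorsFinset.image cycleBlock)
      (σ.supportᶜ.image fun x => [label x]) := by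
    rw [disjoint_left]
    intro b hc hx
    obtain ⟨x, -, rfl⟩ := mem_image.mp hx
    exact absurd (mem_filter.mp ((filter_blocks σ).symm ▸ hc)).2 (by simp)
  rw [blocks, card_union_of_disjoint hdisj,
    card_image_of_injOn (leftInvOn_blockPerm_cycleBlock σ).injOn,
    card_image_of_injective _ fun x y h => label_injective (List.singleton_injective h),
    card_compl, Fintype.card_fin, numCycles, sum_cycleType, cycleType_def, Multiset.card_map]
  rfl

lemma cycleFactorsFinset_eq_image_blocks :
    σ.cycleFactorsFinset = ((blocks σ).filter (fun b => 2 ≤ b.length)).image blockPerm := by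
  rw [filter_blocks, image_image]
  exact ((image_congr (leftInvOn_blockPerm_cycleBlock σ)).trans image_id).symm

end Blocks

lemma blocks_injective : Function.Injective (blocks (N := N)) := fun σ τ h =>
  cycleFactorsFinset_injective <| by
    rw [cycleFactorsFinset_eq_image_blocks, h, ← cycleFactorsFinset_eq_image_blocks]

section Partition

variable (σ : Perm (Fin N))

lemma mem_Icc_of_mem_blocks {b : List ℕ} (hb : b ∈ blocks σ) {y : ℕ} (hy : y ∈ b) :
    y ∈ Icc 1 N := by
  rcases mem_union.mp hb with hb | hb
  · obtain ⟨c, -, rfl⟩ := mem_image.mp hb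
    exact mem_Icc_of_mem_cycleBlock hy
  · obtain ⟨x, -, rfl⟩ := mem_image.mp hb
    rw [List.mem_singleton.mp hy]
    exact label_mem_Icc x

lemma eq_of_label_mem_blocks {b : List ℕ} (hb : b ∈ blocks σ) {x : Fin N} (hx : label x ∈ b) :
    b = if x ∈ σ.support then cycleBlock (σ.cycleOf x) else [label x] := by
  rcases mem_union.mp hb with hb | hb
  · obtain ⟨c, hc, rfl⟩ := mem_image.mp hb
    have hxc : x ∈ c.support :=
      (label_mem_cycleBlock (mem_cycleFactorsFinset_iff.mp hc).1).mp hx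
    rw [if_pos (mem_cycleFactorsFinset_support_le hc hxc), ← cycle_is_cycleOf hxc hc]
  · obtain ⟨y, hy, rfl⟩ := mem_image.mp hb
    obtain rfl := label_injective (List.mem_singleton.mp hx)
    rw [if_neg (mem_compl.mp hy)]

lemma exists_mem_blocks_label_mem (x : Fin N) : ∃ b ∈ blocks σ, label x ∈ b := by
  by_cases hx : x ∈ σ.support
  · refine ⟨cycleBlock (σ.cycleOf x),
      mem_union_left _ (mem_image_of_mem _ (cycleOf_mem_cycleFactorsFinset_iff.mpr hx)), ?_⟩
    rw [label_mem_cycleBlock (isCycle_cycleOf σ (mem_support.mp hx)), mem_support_cycleOf_iff]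
    exact ⟨SameCycle.refl _ _, hx⟩
  · exact ⟨[label x], mem_union_right _ (mem_image_of_mem _ (mem_compl.mpr hx)),
      List.mem_singleton_self _⟩

lemma isOrderedPartition_blocks : IsOrderedPartition N (blocks σ) := by
  refine ⟨fun b hb => ?_, fun b₁ hb₁ b₂ hb₂ hne y hy₁ hy₂ => ?_, fun y => ⟨?_, ?_⟩⟩
  · rcases mem_union.mp hb with hb | hb
    · obtain ⟨c, hc, rfl⟩ := mem_image.mp hb
      have hc := (mem_cycleFactorsFinset_iff.mp hc).1
      refine ⟨List.ne_nil_of_length_pos ?_, nodup_cycleBlock c⟩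
      rw [length_cycleBlock hc]
      exact hc.nonempty_support.card_pos
    · obtain ⟨x, -, rfl⟩ := mem_image.mp hb
      simp
  · obtain ⟨x, rfl⟩ := exists_label_eq (mem_Icc_of_mem_blocks σ hb₁ hy₁)
    exact hne ((eq_of_label_mem_blocks σ hb₁ hy₁).trans (eq_of_label_mem_blocks σ hb₂ hy₂).symm)
  · rintro ⟨b, hb, hy⟩
    exact mem_Icc_of_mem_blocks σ hb hy
  · intro hy
    obtain ⟨x, rfl⟩ := exists_label_eq hy
    exact exists_mem_blocks_label_mem σ x

lemma partitionWeight_blocks : partitionWeight (blocks σ) = 0 := by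
  refine sum_eq_zero fun b hb => ?_
  rcases mem_union.mp hb with hb | hb
  · obtain ⟨c, hc, rfl⟩ := mem_image.mp hb
    exact blockWeight_cycleBlock (mem_cycleFactorsFinset_iff.mp hc).1
  · obtain ⟨x, -, rfl⟩ := mem_image.mp hb
    simp [blockWeight]

end Partition

def blockCycles (N : ℕ) (P : Finset (List ℕ)) : Finset (Perm (Fin N)) :=
  (P.filter fun b => 2 ≤ b.length).image blockPerm

section Surjective

variable {P : Finset (List ℕ)} (hP : IsOrderedPartition N P)
include hP

lemma isCycle_of_mem_blockCycles {f : Perm (Fin N)} (hf : f ∈ blockCycles N P) : f.IsCycle := by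
  obtain ⟨b, hb, rfl⟩ := mem_image.mp hf
  rw [mem_filter] at hb
  exact isCycle_blockPerm (hP.nodup hb.1) (fun _ => hP.mem_Icc hb.1) hb.2

lemma pairwise_disjoint_blockCycles :
    (blockCycles N P : Set (Perm (Fin N))).Pairwise Perm.Disjoint := by
  simp only [blockCycles, coe_image, coe_filter]
  rintro _ ⟨b₁, ⟨hb₁, h₁⟩, rfl⟩ _ ⟨b₂, ⟨hb₂, h₂⟩, rfl⟩ hne
  rw [disjoint_iff_disjoint_support, disjoint_left]
  intro x hx₁ hx₂
  rw [mem_support_blockPerm (hP.nodup hb₁) (fun _ => hP.mem_Icc hb₁) h₁] at hx₁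
  rw [mem_support_blockPerm (hP.nodup hb₂) (fun _ => hP.mem_Icc hb₂) h₂] at hx₂
  exact hne (congrArg blockPerm (hP.eq_of_mem_of_mem hb₁ hb₂ hx₁ hx₂))

lemma blocks_eq_of_cycleFactorsFinset_eq (hw : partitionWeight P = 0) {σ : Perm (Fin N)}
    (hσ : σ.cycleFactorsFinset = blockCycles N P) : blocks σ = P := by
  have hsupp (x : Fin N) : x ∈ σ.support ↔ ∃ b ∈ P, 2 ≤ b.length ∧ label x ∈ b := by
    rw [mem_support_iff_mem_support_of_mem_cycleFactorsFinset, hσ, blockCycles, exists_mem_image]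
    simp only [mem_filter, and_assoc]
    refine exists_congr fun b => and_congr_right fun hb => and_congr_right fun h2 =>
      mem_support_blockPerm (hP.nodup hb) (fun _ => hP.mem_Icc hb) h2
  have hlong : σ.cycleFactorsFinset.image cycleBlock = P.filter fun b => 2 ≤ b.length := by
    rw [hσ, blockCycles, image_image]
    refine (image_congr fun b hb => ?_).trans image_id
    rw [coe_filter] at hb
    exact cycleBlock_blockPerm (hP.nodup hb.1) (fun _ => hP.mem_Icc hb.1) hb.2
      (sum_eq_zero_iff.mp hw b hb.1)
  have hshort : (σ.supportᶜ.image fun x => [label x]) = P.filter fun b => ¬2 ≤ b.length := by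
    ext b
    simp only [mem_image, mem_compl, mem_filter, hsupp, not_exists, not_and]
    constructor
    · rintro ⟨x, hx, rfl⟩
      obtain ⟨b, hb, hxb⟩ := (hP.2.2 (label x)).mpr (label_mem_Icc x)
      have h2 : ¬2 ≤ b.length := fun h2 => hx b hb h2 hxb
      obtain ⟨y, rfl⟩ := hP.exists_eq_singleton_of_not_two_le hb h2
      obtain rfl := List.mem_singleton.mp hxb
      exact ⟨hb, h2⟩
    · rintro ⟨hb, h2⟩
      obtain ⟨y, rfl⟩ := hP.exists_eq_singleton_of_not_two_le hb h2
      obtain ⟨x, rfl⟩ := exists_label_eq (hP.mem_Icc hb (List.mem_singleton_self _))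
      refine ⟨x, fun b' hb' h2' hxb' => h2 ?_, rfl⟩
      rwa [hP.eq_of_mem_of_mem hb' hb hxb' (List.mem_singleton_self _)] at h2'
  rw [blocks, hlong, hshort, filter_union_filter_not_eq]

lemma exists_blocks_eq (hw : partitionWeight P = 0) : ∃ σ : Perm (Fin N), blocks σ = P := by
  obtain ⟨σ, hσ⟩ := exists_cycleFactorsFinset_eq (fun _ => isCycle_of_mem_blockCycles hP)
    (pairwise_disjoint_blockCycles hP)
  exact ⟨σ, blocks_eq_of_cycleFactorsFinset_eq hP hw hσ⟩

end Surjective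

end WeightedLah

open WeightedLah in
theorem weightedLah_zero_eq_stirlingFirst (N M : ℕ) : weightedLah 0 N M = stirlingFirst N M := by
  have hset : {P | IsOrderedPartition N P ∧ #P = M ∧ (partitionWeight P : ℤ) = 0} =
      blocks '' {σ : Equiv.Perm (Fin N) | numCycles σ = M} := by
    ext P
    simp only [Set.mem_ofPred_eq, Set.mem_image, Nat.cast_eq_zero]
    constructor
    · rintro ⟨hP, rfl, hw⟩
      obtain ⟨σ, rfl⟩ := exists_blocks_eq hP hw
      exact ⟨σ, (card_blocks σ).symm, rfl⟩
    · rintro ⟨σ, rfl, rfl⟩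
      exact ⟨isOrderedPartition_blocks σ, card_blocks σ, partitionWeight_blocks σ⟩
  rw [weightedLah, hset, Set.ncard_image_of_injective _ blocks_injective, ← Nat.card_coe_set_eq]
  rfl

theorem weightedLah_zero_eq_stirling (n m ℓ : ℕ) (hm : 2 ≤ m) (hmn : m ≤ n)
    (hℓ : ℓ ≤ n - m) :
    weightedLah 0 (n - 1 - ℓ) (m - 1) = stirlingFirst (n - 1 - ℓ) (m - 1) ∧
      0 < weightedLah 0 (n - 1 - ℓ) (m - 1) := by
  rw [weightedLah_zero_eq_stirlingFirst]
  exact ⟨rfl, stirlingFirst_pos (by omega) (by omega)⟩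
end
end

section
/- The coefficients e_{k,n,m} = (1/(n−1)!) Σ_{ℓ=0}^{k−1} W(ℓ,n,m+1) A(m,k−ℓ−1) satisfy the symmetry e_{k,n,m} = e_{n−k,n,m} for all 1 ≤ k ≤ n−1 and 1 ≤ m ≤ n−1. -/
noncomputable section

open Finset

/-!
Both factors in the sum defining `(n - 1)! e_{k,n,m}` are palindromic. Reflecting every block
through `x ↦ n + 1 - x` swaps, inside each block, the elements below and above its first
element, so `W(ℓ, n, p) = W(n - p - ℓ, n, p)`, supported on `0 ≤ ℓ ≤ n - p`. Composing a
permutation with the value reversal `i ↦ m - 1 - i` turns descents into ascents, so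
`A(m, j) = A(m, m - 1 - j)`, supported on `0 ≤ j ≤ m - 1`. The sum is the coefficient of
`x^(k-1)` in the product of the two generating polynomials, which is then palindromic of
degree `n - 2`, and `(n - 2) - (k - 1) = (n - k) - 1`.
-/

section Palindromic

variable {R : Type*} [NonUnitalNonAssocSemiring R]

theorem Finset.Nat.sum_antidiagonal_mul_eq_of_palindromic {f g : ℕ → R} {a b c : ℕ}
    (hf : ∀ i, a < i → f i = 0) (hg : ∀ j, b < j → g j = 0)
    (hf_symm : ∀ i ≤ a, f (a - i) = f i) (hg_symm : ∀ j ≤ b, g (b - j) = g j)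
    (hc : c ≤ a + b) :
    ∑ x ∈ antidiagonal c, f x.1 * g x.2 = ∑ x ∈ antidiagonal (a + b - c), f x.1 * g x.2 := by
  have bounds : ∀ x : ℕ × ℕ, f x.1 * g x.2 ≠ 0 → x.1 ≤ a ∧ x.2 ≤ b := fun x hx =>
    ⟨not_lt.mp fun h => hx (by rw [hf _ h, zero_mul]),
      not_lt.mp fun h => hx (by rw [hg _ h, mul_zero])⟩
  refine sum_bij_ne_zero (fun x _ _ => (a - x.1, b - x.2)) ?_ ?_ ?_ ?_
  · intro x hx hx0
    have := bounds x hx0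
    simp only [HasAntidiagonal.mem_antidiagonal] at hx ⊢
    omega
  · intro x hx hx0 y hy hy0 hxy
    have := bounds x hx0
    have := bounds y hy0
    simp only [Prod.mk.injEq] at hxy
    ext <;> omega
  · intro y hy hy0
    have := bounds y hy0
    refine ⟨(a - y.1, b - y.2), ?_, ?_, ?_⟩
    · simp only [HasAntidiagonal.mem_antidiagonal] at hy ⊢
      omega
    · rwa [hf_symm _ this.1, hg_symm _ this.2]
    · ext <;> simp only <;> omega
  · intro x _ hx0
    have := bounds x hx0
    rw [hf_symm _ this.1, hg_symm _ this.2]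

end Palindromic

lemma List.getD_ofFn_of_lt {m : ℕ} (f : Fin m → ℕ) {i : ℕ} (h : i < m) :
    (List.ofFn f).getD i 0 = f ⟨i, h⟩ := by
  rw [List.getD_eq_getElem _ _ (by simpa using h), List.getElem_ofFn]

lemma descentCount_le (m : ℕ) (σ : Equiv.Perm (Fin m)) : descentCount m σ ≤ m - 1 :=
  (card_filter_le _ _).trans (card_range _).le

lemma descentCount_trans_revPerm (m : ℕ) (σ : Equiv.Perm (Fin m)) :
    descentCount m (σ.trans Fin.revPerm) = m - 1 - descentCount m σ := by
  have ascent_iff_not_descent : ∀ i ∈ range (m - 1),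
      ((List.ofFn fun j => ((σ.trans Fin.revPerm) j : ℕ)).getD (i + 1) 0 <
        (List.ofFn fun j => ((σ.trans Fin.revPerm) j : ℕ)).getD i 0) ↔
      ¬ ((List.ofFn fun j => (σ j : ℕ)).getD (i + 1) 0 <
        (List.ofFn fun j => (σ j : ℕ)).getD i 0) := by
    intro i hi
    have hi : i + 1 < m := by rw [mem_range] at hi; omega
    simp only [List.getD_ofFn_of_lt _ hi, List.getD_ofFn_of_lt _ (Nat.lt_of_succ_lt hi),
      Equiv.trans_apply, Fin.revPerm_apply, Fin.val_rev]
    have hne : (σ ⟨i, Nat.lt_of_succ_lt hi⟩ : ℕ) ≠ σ ⟨i + 1, hi⟩ :=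
      fun h => by simpa [Fin.ext_iff] using σ.injective (Fin.ext h)
    have := (σ ⟨i, Nat.lt_of_succ_lt hi⟩).isLt
    have := (σ ⟨i + 1, hi⟩).isLt
    omega
  rw [descentCount, descentCount, filter_congr ascent_iff_not_descent, filter_not,
    card_sdiff_of_subset (filter_subset _ _), card_range]

lemma eulerian_eq_zero_of_lt {m j : ℕ} (h : m - 1 < j) : eulerian m j = 0 := by
  rw [eulerian, Nat.card_eq_zero]
  exact Or.inl ⟨fun σ => (descentCount_le m σ).not_gt (σ.2.symm ▸ h)⟩

lemma eulerian_symm {m j : ℕ} (hj : j ≤ m - 1) : eulerian m (m - 1 - j) = eulerian m j := by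
  refine Nat.card_congr ⟨fun σ => ⟨σ.1.trans Fin.revPerm, ?_⟩,
    fun σ => ⟨σ.1.trans Fin.revPerm, ?_⟩, fun σ => ?_, fun σ => ?_⟩
  · rw [descentCount_trans_revPerm, σ.2]; omega
  · rw [descentCount_trans_revPerm, σ.2]
  all_goals ext; simp

lemma blockWeight_map_add_blockWeight {f : ℕ → ℕ} {s : Set ℕ} (hf : StrictAntiOn f s)
    {b : List ℕ} (hbs : ∀ x ∈ b, x ∈ s) (hne : b ≠ []) (hnd : b.Nodup) :
    blockWeight (b.map f) + blockWeight b + 1 = b.length := by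
  obtain ⟨hd, tl, rfl⟩ := List.exists_cons_of_ne_nil hne
  have hhd : hd ∈ s := hbs hd List.mem_cons_self
  have above_iff : ∀ x ∈ tl, (f x < f hd ↔ ¬ x < hd) := fun x hx => by
    have hne : x ≠ hd := fun e => (List.nodup_cons.mp hnd).1 (e ▸ hx)
    rw [hf.lt_iff_gt (hbs x (List.mem_cons_of_mem _ hx)) hhd]
    omega
  simp only [blockWeight, List.map_cons, List.headI_cons, List.filter_cons, lt_irrefl,
    decide_false, Bool.false_eq_true, if_false, List.filter_map, List.length_map,
    List.length_cons]
  have filter_eq : tl.filter ((fun x => decide (x < f hd)) ∘ f) =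
      tl.filter (fun x => !decide (x < hd)) :=
    List.filter_congr fun x hx => by
      rw [Function.comp_apply, ← decide_not]
      exact decide_eq_decide.mpr (above_iff x hx)
  rw [filter_eq, List.length_eq_length_filter_add (fun x => decide (x < hd)) (l := tl)]
  exact congrArg (· + 1) (Nat.add_comm _ _)

lemma Function.Involutive.mem_list_map_iff {φ : ℕ → ℕ} (hφ : Function.Involutive φ)
    {b : List ℕ} {x : ℕ} : x ∈ b.map φ ↔ φ x ∈ b := by
  rw [List.mem_map]
  exact ⟨fun ⟨y, hy, hyx⟩ => hyx ▸ (hφ y).symm ▸ hy, fun hx => ⟨φ x, hx, hφ x⟩⟩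

lemma Finset.image_map_image_map_of_involutive {φ : ℕ → ℕ} (hφ : Function.Involutive φ)
    (P : Finset (List ℕ)) : (P.image (List.map φ)).image (List.map φ) = P := by
  simp [image_image, hφ.comp_self]

/-- Extended by the identity outside `Icc 1 n` so as to be an involution of `ℕ`. -/
def reflectIcc (n x : ℕ) : ℕ := if x ∈ Icc 1 n then n + 1 - x else x

lemma reflectIcc_mem_Icc {n x : ℕ} (hx : x ∈ Icc 1 n) : reflectIcc n x ∈ Icc 1 n := by
  rw [mem_Icc] at hx
  simp only [reflectIcc, mem_Icc, hx, and_self, if_true]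
  omega

lemma reflectIcc_involutive (n : ℕ) : Function.Involutive (reflectIcc n) := fun x => by
  by_cases hx : x ∈ Icc 1 n
  · have hx' := reflectIcc_mem_Icc hx
    rw [mem_Icc] at hx
    rw [reflectIcc, if_pos hx', reflectIcc, if_pos (mem_Icc.mpr hx)]
    omega
  · have hfix : reflectIcc n x = x := if_neg hx
    rw [hfix, hfix]

lemma strictAntiOn_reflectIcc (n : ℕ) : StrictAntiOn (reflectIcc n) (Icc 1 n : Set ℕ) :=
  fun x hx y hy hxy => by
    rw [coe_Icc, Set.mem_Icc, ← mem_Icc] at hx hy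
    simp only [reflectIcc, if_pos hx, if_pos hy]
    rw [mem_Icc] at hx hy
    omega

namespace IsOrderedPartition

variable {n : ℕ} {P : Finset (List ℕ)}

lemma mem_Icc_s9 (h : IsOrderedPartition n P) {b : List ℕ} (hb : b ∈ P) {x : ℕ} (hx : x ∈ b) :
    x ∈ Icc 1 n :=
  (h.2.2 x).mp ⟨b, hb, hx⟩

lemma sum_length (h : IsOrderedPartition n P) : ∑ b ∈ P, b.length = n := by
  classical
  have hunion : P.biUnion List.toFinset = Icc 1 n := by
    ext x
    simpa only [mem_biUnion, List.mem_toFinset] using h.2.2 x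
  rw [← Nat.add_sub_cancel n 1, ← Nat.card_Icc 1 n, ← hunion, card_biUnion]
  · exact sum_congr rfl fun b hb => (List.toFinset_card_of_nodup (h.1 b hb).2).symm
  · intro b₁ h₁ b₂ h₂ hne
    exact disjoint_left.mpr fun x hx₁ hx₂ =>
      h.2.1 b₁ h₁ b₂ h₂ hne x (List.mem_toFinset.mp hx₁) (List.mem_toFinset.mp hx₂)

lemma image_map {φ : ℕ → ℕ} (hφ : Function.Involutive φ) (hIcc : ∀ x ∈ Icc 1 n, φ x ∈ Icc 1 n)
    (h : IsOrderedPartition n P) : IsOrderedPartition n (P.image (List.map φ)) := by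
  refine ⟨?_, ?_, fun x => ?_⟩
  · simp only [mem_image, forall_exists_index, and_imp, forall_apply_eq_imp_iff₂]
    exact fun b hb => ⟨by simpa using (h.1 b hb).1, (h.1 b hb).2.map hφ.injective⟩
  · simp only [mem_image, forall_exists_index, and_imp, forall_apply_eq_imp_iff₂, ne_eq]
    intro b₁ h₁ b₂ h₂ hne x hx₁ hx₂
    rw [hφ.mem_list_map_iff] at hx₁ hx₂
    exact h.2.1 b₁ h₁ b₂ h₂ (fun e => hne (e ▸ rfl)) _ hx₁ hx₂
  · simp only [mem_image, exists_exists_and_eq_and, hφ.mem_list_map_iff]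
    rw [h.2.2]
    exact ⟨fun hx => hφ x ▸ hIcc _ hx, hIcc x⟩

lemma partitionWeight_image_map_add {φ : ℕ → ℕ} (hφ : Function.Injective φ)
    (hanti : StrictAntiOn φ (Icc 1 n : Set ℕ)) (h : IsOrderedPartition n P) :
    partitionWeight (P.image (List.map φ)) + partitionWeight P + #P = n := by
  rw [partitionWeight, sum_image fun _ _ _ _ e => List.map_injective_iff.mpr hφ e,
    partitionWeight, card_eq_sum_ones, ← sum_add_distrib, ← sum_add_distrib, ← h.sum_length]
  exact sum_congr rfl fun b hb => blockWeight_map_add_blockWeight hanti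
    (fun x hx => mem_coe.mpr (h.mem_Icc_s9 hb hx)) (h.1 b hb).1 (h.1 b hb).2

lemma partitionWeight_add_card_le (h : IsOrderedPartition n P) : partitionWeight P + #P ≤ n := by
  have := h.partitionWeight_image_map_add (reflectIcc_involutive n).injective
    (strictAntiOn_reflectIcc n)
  omega

lemma image_map_reflectIcc {m : ℕ} {ℓ : ℤ} (h : IsOrderedPartition n P) (hc : #P = m)
    (hw : (partitionWeight P : ℤ) = ℓ) :
    IsOrderedPartition n (P.image (List.map (reflectIcc n))) ∧
      #(P.image (List.map (reflectIcc n))) = m ∧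
      (partitionWeight (P.image (List.map (reflectIcc n))) : ℤ) = n - m - ℓ := by
  have hinj := (reflectIcc_involutive n).injective
  refine ⟨h.image_map (reflectIcc_involutive n) (fun _ => reflectIcc_mem_Icc),
    hc ▸ card_image_of_injective _ (List.map_injective_iff.mpr hinj), ?_⟩
  have := h.partitionWeight_image_map_add hinj (strictAntiOn_reflectIcc n)
  omega

end IsOrderedPartition

lemma weightedLah_eq_zero_of_lt {ℓ : ℤ} {n m : ℕ} (h : (n : ℤ) - m < ℓ) :
    weightedLah ℓ n m = 0 := by
  refine (congrArg Set.ncard (Set.eq_empty_of_forall_notMem ?_)).trans (Set.ncard_empty _)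
  rintro P ⟨hP, rfl, rfl⟩
  have := hP.partitionWeight_add_card_le
  omega

lemma weightedLah_symm (ℓ : ℤ) (n m : ℕ) : weightedLah (n - m - ℓ) n m = weightedLah ℓ n m := by
  symm
  refine Set.ncard_congr (fun P _ => P.image (List.map (reflectIcc n)))
    (fun P ⟨h, hc, hw⟩ => h.image_map_reflectIcc hc hw) (fun P Q _ _ e => ?_) ?_
  · rw [← image_map_image_map_of_involutive (reflectIcc_involutive n) P, e,
      image_map_image_map_of_involutive (reflectIcc_involutive n)]
  · rintro Q ⟨h, hc, hw⟩
    refine ⟨Q.image (List.map (reflectIcc n)), ?_,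
      image_map_image_map_of_involutive (reflectIcc_involutive n) Q⟩
    obtain ⟨h', hc', hw'⟩ := h.image_map_reflectIcc hc hw
    exact ⟨h', hc', by rw [hw']; ring⟩

lemma eCoef_succ (c n m : ℕ) :
    eCoef (c + 1) n m = (1 / (n - 1).factorial : ℚ) *
      ∑ x ∈ antidiagonal c, (weightedLah x.1 n (m + 1) : ℚ) * (eulerian m x.2 : ℚ) := by
  rw [eCoef, Nat.sum_antidiagonal_eq_sum_range_succ_mk]
  congr 1
  refine sum_congr rfl fun ℓ _ => ?_
  rw [Nat.sub_right_comm, Nat.add_sub_cancel]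

theorem eCoef_symm (k n m : ℕ) (hk : 1 ≤ k) (hkn : k ≤ n - 1)
    (hm : 1 ≤ m) (hmn : m ≤ n - 1) :
    eCoef k n m = eCoef (n - k) n m := by
  obtain ⟨c, rfl⟩ : ∃ c, k = c + 1 := ⟨k - 1, by omega⟩
  have hnk : n - (c + 1) = n - m - 1 + (m - 1) - c + 1 := by omega
  rw [hnk, eCoef_succ, eCoef_succ]
  congr 1
  refine Nat.sum_antidiagonal_mul_eq_of_palindromic (f := fun i => (weightedLah i n (m + 1) : ℚ))
    (g := fun j => (eulerian m j : ℚ)) (fun i hi => ?_) (fun j hj => ?_) (fun i hi => ?_)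
    (fun j hj => ?_) (by omega)
  · rw [weightedLah_eq_zero_of_lt (by push_cast; omega), Nat.cast_zero]
  · rw [eulerian_eq_zero_of_lt hj, Nat.cast_zero]
  · rw [← weightedLah_symm]
    congr 2
    push_cast
    omega
  · exact congrArg Nat.cast (eulerian_symm hj)
end
end
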